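/- If e ∈ E is the i-th occurrence of an E-edge along the T-trace cycle (counting only occurrences of edges of E, in order, and ignoring suffix-link arcs), then Ψ(e) = T[i]; equivalently, the concatenation of the Ψ-labels of the E-edge occurrences along the T-trace cycle, in order, equals T. -/
import Mathlib


/-- `heapHList T i = [h_0, h_1, …, h_i]`: `h_0 = ε` and `h_i` is the shortest
prefix of `T[i:]` (the suffix of `T` starting at 1-indexed position `i`) not
among `h_0, …, h_{i-1}` (falling back to `T[i:]` itself if every prefix
already occurs there). -/
def heapHList {α : Type*} [DecidableEq α] (T : List α) : ℕ → List (List α)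
  | 0 => [[]]
  | i + 1 =>
    let prev := heapHList T i
    let suf := T.drop i
    prev ++ [(((List.range (suf.length + 1)).find?
        (fun k => decide (suf.take k ∉ prev))).elim suf fun k => suf.take k)]

/-- `heapH T i = h_i`. -/
def heapH {α : Type*} [DecidableEq α] (T : List α) (i : ℕ) : List α :=
  (heapHList T i).getD i []

/-- `T` ends with a letter that occurs nowhere else in `T`
(1-indexed: `T[i] ≠ T[n]` for all `1 ≤ i ≤ n - 1`). -/
def EndsUnique {α : Type*} (T : List α) : Prop :=
  ∀ i, i + 1 < T.length → T[i]? ≠ T[T.length - 1]?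

open scoped Classical

/-- `p` is a directed path (a list of consecutive arcs) from `a` to `b` in the
graph whose edge relation is `E`. -/
def IsArcPath {V : Type*} (E : V → V → Prop) : List (V × V) → V → V → Prop
  | [], a, b => a = b
  | e :: p, a, b => e.1 = a ∧ E e.1 e.2 ∧ IsArcPath E p e.2 b

/-- The edge relation of `PH(T)` on the nodes `{0, …, n}` (`n = |T|`). -/
def phEdge {α : Type*} [DecidableEq α] (T : List α) (i j : ℕ) : Prop :=
  i ≤ T.length ∧ j ≤ T.length ∧ ∃ c : α, heapH T i ++ [c] = heapH T j

/-- `p` is the `T`-trace cycle `p_0 · f_1 · p_1 ⋯ f_{n-1} · p_{n-1} · f_n` of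
`PHS(T)` (arcs are pairs of nodes): `f_i = (i, S i)`, `p_0` is the `E`-path
from `0` to `1`, and `p_i` is the `E`-path from `S i` to `i + 1`. -/
def IsTraceCycle {α : Type*} [DecidableEq α] (T : List α) (S : ℕ → ℕ)
    (p : List (ℕ × ℕ)) : Prop :=
  ∃ q : ℕ → List (ℕ × ℕ),
    p = (List.range T.length).flatMap (fun i => q i ++ [(i + 1, S (i + 1))]) ∧
    IsArcPath (phEdge T) (q 0) 0 1 ∧
    (∀ i, 1 ≤ i → i + 1 ≤ T.length → IsArcPath (phEdge T) (q i) (S i) (i + 1))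


section Aux
set_option linter.unusedSectionVars false
variable {α : Type*} [DecidableEq α]

theorem length_heapHList (T : List α) (i : ℕ) : (heapHList T i).length = i + 1 := by
  induction i with
  | zero => rfl
  | succ i ih => simp [heapHList, ih]

theorem heapHList_prefix (T : List α) {i j : ℕ} (h : i ≤ j) :
    heapHList T i <+: heapHList T j := by
  induction j with
  | zero => simp_all
  | succ j ih =>
    rcases Nat.eq_or_lt_of_le h with rfl | h
    · rfl
    · exact (ih (Nat.lt_succ_iff.mp h)).trans ⟨_, rfl⟩

theorem heapH_eq_getD (T : List α) {i j : ℕ} (h : j ≤ i) :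
    (heapHList T i).getD j [] = heapH T j := by
  obtain ⟨t, ht⟩ := heapHList_prefix T h
  rw [heapH, ← ht, List.getD_eq_getElem?_getD, List.getElem?_append_left
    (by rw [length_heapHList]; omega), ← List.getD_eq_getElem?_getD]

theorem heapH_mem (T : List α) {i j : ℕ} (h : j ≤ i) : heapH T j ∈ heapHList T i := by
  rw [← heapH_eq_getD T h, List.getD_eq_getElem?_getD,
    List.getElem?_eq_getElem (by rw [length_heapHList]; omega)]
  exact List.getElem_mem _

theorem mem_heapHList (T : List α) {i : ℕ} {x : List α} :
    x ∈ heapHList T i ↔ ∃ j ≤ i, heapH T j = x := by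
  constructor
  · intro hx
    obtain ⟨j, hj, he⟩ := List.mem_iff_getElem.mp hx
    rw [length_heapHList] at hj
    exact ⟨j, by omega, by rw [← heapH_eq_getD T (by omega : j ≤ i),
      List.getD_eq_getElem?_getD, List.getElem?_eq_getElem (by rw [length_heapHList]; omega)]; exact he⟩
  · rintro ⟨j, hj, rfl⟩; exact heapH_mem T hj

theorem heapH_succ_def (T : List α) (i : ℕ) :
    heapH T (i + 1) = (((List.range ((T.drop i).length + 1)).find?
        (fun k => decide ((T.drop i).take k ∉ heapHList T i))).elim (T.drop i)
        fun k => (T.drop i).take k) := by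
  rw [heapH]
  show (heapHList T (i+1)).getD (i+1) [] = _
  rw [heapHList, List.getD_eq_getElem?_getD, List.getElem?_append_right
    (by simp [length_heapHList])]
  simp [length_heapHList]

theorem nil_mem_heapHList (T : List α) (i : ℕ) : ([] : List α) ∈ heapHList T i :=
  heapH_mem T (Nat.zero_le i)

/-- F1: `h_{i+1}` is a nonempty prefix of `T.drop i` (for `i < |T|`). -/

theorem heapH_isPrefix (T : List α) {i : ℕ} (h : i < T.length) :
    heapH T (i + 1) <+: T.drop i ∧ heapH T (i + 1) ≠ [] := by
  rw [heapH_succ_def]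
  rcases hf : (List.range ((T.drop i).length + 1)).find?
      (fun k => decide ((T.drop i).take k ∉ heapHList T i)) with _ | k
  · simp only [Option.elim]
    exact ⟨List.prefix_refl _, by simp [List.drop_eq_nil_iff]; omega⟩
  · simp only [Option.elim]
    refine ⟨List.take_prefix _ _, ?_⟩
    rw [List.find?_range_eq_some] at hf
    have hk : ((T.drop i).take k ∉ heapHList T i) := by simpa using hf.1
    have hk0 : k ≠ 0 := by
      rintro rfl
      exact hk (by simpa using nil_mem_heapHList T i)
    simp only [ne_eq, List.take_eq_nil_iff, List.drop_eq_nil_iff]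
    push_neg
    exact ⟨hk0, by omega⟩

/-- The last character of `T` is not the last character of any proper earlier suffix's
prefix: `T.drop i ∉ heapHList T i` when `T` ends uniquely. -/

theorem drop_notMem_heapHList (T : List α)
    (hu : ∀ i, i + 1 < T.length → T[i]? ≠ T[T.length - 1]?)
    {i : ℕ} (h : i < T.length) : T.drop i ∉ heapHList T i := by
  intro hmem
  obtain ⟨j, hj, he⟩ := (mem_heapHList T).mp hmem
  rcases j with _ | j'
  · rw [heapH] at he
    simp only [heapHList] at he
    rw [List.getD_cons_zero] at he
    exact (by simp [List.drop_eq_nil_iff]; omega : T.drop i ≠ []) he.symm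
  · have hj' : j' < T.length := by omega
    obtain ⟨hpre, _⟩ := heapH_isPrefix T hj'
    rw [he] at hpre
    -- T.drop i <+: T.drop j', with j' < i
    have hji : j' < i := by omega
    have hlen : (T.drop i).length ≤ (T.drop j').length := hpre.length_le
    set m := T.length - i with hm
    have hm1 : (T.drop i).length = m := by simp [hm]
    have hmpos : 1 ≤ m := by omega
    have hb1 : m - 1 < (T.drop i).length := by omega
    have hb2 : m - 1 < (T.drop j').length := by omega
    have h1 : (T.drop j')[m-1]'hb2 = (T.drop i)[m-1]'hb1 := (hpre.getElem hb1).symm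
    rw [List.getElem_drop, List.getElem_drop] at h1
    have h2 : j' + (m - 1) + 1 < T.length := by omega
    have h3 : i + (m - 1) = T.length - 1 := by omega
    apply hu (j' + (m-1)) h2
    rw [List.getElem?_eq_getElem (by omega), List.getElem?_eq_getElem (by omega)]
    simp only [h3] at h1
    exact congrArg some h1

/-- F-min: specification of `h_{i+1}`: it's not in the previous heap list, all
strictly shorter prefixes of `T.drop i` are, and it is the take of its length. -/

theorem heapH_spec (T : List α)
    (hu : ∀ i, i + 1 < T.length → T[i]? ≠ T[T.length - 1]?)
    {i : ℕ} (h : i < T.length) :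
    heapH T (i + 1) ∉ heapHList T i ∧
    (∀ k, k < (heapH T (i + 1)).length → (T.drop i).take k ∈ heapHList T i) := by
  rcases hf : (List.range ((T.drop i).length + 1)).find?
      (fun k => decide ((T.drop i).take k ∉ heapHList T i)) with _ | k
  · exfalso
    rw [List.find?_range_eq_none] at hf
    have := hf (T.drop i).length (by omega)
    rw [List.take_length] at this
    simp at this
    exact drop_notMem_heapHList T hu h this
  · have hd : heapH T (i+1) = (T.drop i).take k := by rw [heapH_succ_def, hf]; rfl
    rw [List.find?_range_eq_some] at hf
    obtain ⟨h1, h2, h3⟩ := hf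
    simp only [List.mem_range] at h2
    have hk : k ≤ (T.drop i).length := by omega
    have hlen : (heapH T (i+1)).length = k := by rw [hd, List.length_take]; omega
    constructor
    · rw [hd]; simpa using h1
    · intro k' hk'
      rw [hlen] at hk'
      have := h3 k' hk'
      simpa using this

theorem take_drop_tail (T : List α) (a k : ℕ) :
    ((T.drop a).take (k+1)).drop 1 = (T.drop (a+1)).take k := by
  rw [List.drop_take, List.drop_drop]
  norm_num

theorem heapH_mono (T : List α)
    (hu : ∀ i, i + 1 < T.length → T[i]? ≠ T[T.length - 1]?) :
    ∀ i, 1 ≤ i → i + 1 ≤ T.length →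
      (heapH T i).length ≤ (heapH T (i + 1)).length + 1 := by
  intro i
  induction i using Nat.strong_induction_on with
  | _ i IH =>
    intro hi1 hi2
    by_contra hcon
    push_neg at hcon
    obtain ⟨i', rfl⟩ : ∃ i', i = i' + 1 := ⟨i - 1, by omega⟩
    set k := (heapH T (i' + 1 + 1)).length with hkdef
    have hi'len : i' < T.length := by omega
    have hilen : i' + 1 < T.length := by omega
    obtain ⟨hnm_i, hmin_i⟩ := heapH_spec T hu hi'len
    obtain ⟨hpre_i, hne_i⟩ := heapH_isPrefix T hi'len
    obtain ⟨hnm_s, _⟩ := heapH_spec T hu hilen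
    obtain ⟨hpre_s, hne_s⟩ := heapH_isPrefix T hilen
    have hseq : heapH T (i' + 1 + 1) = (T.drop (i' + 1)).take k :=
      List.prefix_iff_eq_take.mp hpre_s
    have hk1 : k + 1 < (heapH T (i' + 1)).length := by omega
    have h4 : (T.drop i').take (k + 1) ∈ heapHList T i' := hmin_i (k + 1) hk1
    obtain ⟨j, hj, hje⟩ := (mem_heapHList T).mp h4
    have hlen_i : (heapH T (i' + 1)).length ≤ T.length - i' := by
      have := hpre_i.length_le; simpa using this
    rcases j with _ | j'
    · -- j = 0: h_0 = [] but take (k+1) nonempty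
      have : heapH T 0 = [] := rfl
      rw [this] at hje
      have : (T.drop i').take (k + 1) ≠ [] := by
        simp only [ne_eq, List.take_eq_nil_iff, List.drop_eq_nil_iff]
        push_neg
        exact ⟨by omega, by omega⟩
      exact this hje.symm
    · have hj'len : j' < T.length := by omega
      obtain ⟨hpre_j, hne_j⟩ := heapH_isPrefix T hj'len
      have hmj : (heapH T (j' + 1)).length = k + 1 := by
        rw [hje, List.length_take]
        simp only [List.length_drop]
        omega
      have t1 : (heapH T (j' + 1)).drop 1 = (T.drop (i' + 1)).take k := by
        rw [hje, take_drop_tail]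
      have t2 : heapH T (j' + 1) = (T.drop j').take (k + 1) := by
        have := List.prefix_iff_eq_take.mp hpre_j
        rwa [hmj] at this
      have t3 : (heapH T (j' + 1)).drop 1 = (T.drop (j' + 1)).take k := by
        rw [t2, take_drop_tail]
      have key : (T.drop (j' + 1)).take k = (T.drop (i' + 1)).take k := by
        rw [← t3, t1]
      have hIH := IH (j' + 1) (by omega) (by omega) (by omega)
      rw [hmj] at hIH
      -- k ≤ (heapH T (j'+2)).length
      have hk2 : k ≤ (heapH T (j' + 1 + 1)).length := by omega
      have hj1len : j' + 1 < T.length := by omega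
      rcases Nat.lt_or_ge k (heapH T (j' + 1 + 1)).length with hlt | hge
      · obtain ⟨_, hmin_j⟩ := heapH_spec T hu hj1len
        have hmem : (T.drop (j' + 1)).take k ∈ heapHList T (j' + 1) := hmin_j k hlt
        have hmem2 : (T.drop (j' + 1)).take k ∈ heapHList T (i' + 1) :=
          (heapHList_prefix T (by omega : j' + 1 ≤ i' + 1)).subset hmem
        rw [key, ← hseq] at hmem2
        exact hnm_s hmem2
      · have heq : k = (heapH T (j' + 1 + 1)).length := by omega
        obtain ⟨hpre_j1, _⟩ := heapH_isPrefix T hj1len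
        have : heapH T (j' + 1 + 1) = (T.drop (j' + 1)).take k := by
          have := List.prefix_iff_eq_take.mp hpre_j1
          rwa [← heq] at this
        rw [key, ← hseq] at this
        have hmem : heapH T (i' + 1 + 1) ∈ heapHList T (i' + 1) := by
          rw [← this]
          exact heapH_mem T (by omega : j' + 1 + 1 ≤ i' + 1)
        exact hnm_s hmem

theorem arcPath_labels (T : List α) (Ψ : ℕ → ℕ → α)
    (hΨ : ∀ i j, phEdge T i j → heapH T i ++ [Ψ i j] = heapH T j) :
    ∀ (q : List (ℕ × ℕ)) (a b : ℕ), IsArcPath (phEdge T) q a b →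
      heapH T a ++ q.map (fun e => Ψ e.1 e.2) = heapH T b ∧
      q.filter (fun e => decide (∃ c : α, heapH T e.1 ++ [c] = heapH T e.2)) = q := by
  intro q
  induction q with
  | nil =>
    intro a b h
    cases h
    simp
  | cons e q ih =>
    intro a b h
    obtain ⟨h1, h2, h3⟩ := h
    obtain ⟨ihm, ihf⟩ := ih e.2 b h3
    subst h1
    constructor
    · have := hΨ e.1 e.2 h2
      simp only [List.map_cons]
      rw [← ihm, ← this]
      simp
    · rw [List.filter_cons]
      have : (decide (∃ c : α, heapH T e.1 ++ [c] = heapH T e.2)) = true := by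
        simp only [decide_eq_true_eq]
        exact h2.2.2
      rw [this, if_pos rfl, ihf]

theorem heapH_zero (T : List α) : heapH T 0 = [] := rfl

end Aux

/-- If `e ∈ E` is the `i`-th occurrence of an `E`-edge along
the `T`-trace cycle (ignoring suffix-link arcs), then `Ψ(e) = T[i]`;
equivalently, the concatenation of the `Ψ`-labels of the `E`-edge occurrences
along the `T`-trace cycle, in order, equals `T`. Here `S` is any suffix-link
map and `Ψ` any labeling with `h_i Ψ(i,j) = h_j` on edges. -/
theorem statement8 {α : Type*} [DecidableEq α] (T : List α) (n : ℕ)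
    (hn : n = T.length) (hpos : 1 ≤ n) (hu : EndsUnique T)
    (S : ℕ → ℕ)
    (hS : ∀ i, 1 ≤ i → i ≤ n →
      S i ≤ n ∧ ∃ c : α, heapH T i = c :: heapH T (S i))
    (Ψ : ℕ → ℕ → α)
    (hΨ : ∀ i j, phEdge T i j → heapH T i ++ [Ψ i j] = heapH T j)
    (p : List (ℕ × ℕ)) (hp : IsTraceCycle T S p) :
    (p.filter
        (fun e => decide (∃ c : α, heapH T e.1 ++ [c] = heapH T e.2))).map
      (fun e => Ψ e.1 e.2) = T := by
  have hu' : ∀ i, i + 1 < T.length → T[i]? ≠ T[T.length - 1]? := hu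
  subst hn
  obtain ⟨q, hpeq, hq0, hqi⟩ := hp
  -- last heap string has length 1
  have hmn : (heapH T T.length).length = 1 := by
    obtain ⟨i', hi'⟩ : ∃ i', T.length = i' + 1 := ⟨T.length - 1, by omega⟩
    obtain ⟨hpre, hne⟩ := heapH_isPrefix T (by omega : i' < T.length)
    have h1 := hpre.length_le
    have h2 : (heapH T (i' + 1)).length ≠ 0 := by simpa using hne
    simp only [List.length_drop] at h1
    rw [hi']
    omega
  have key : ∀ k s, s + k = T.length →
      (((List.range' s k).flatMap (fun i => q i ++ [(i + 1, S (i + 1))])).filter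
          (fun e => decide (∃ c : α, heapH T e.1 ++ [c] = heapH T e.2))).map
        (fun e => Ψ e.1 e.2) = T.drop (s + (heapH T s).length - 1) := by
    intro k
    induction k with
    | zero =>
      intro s hs
      simp only [List.range'_zero, List.flatMap_nil, List.filter_nil, List.map_nil]
      have hs' : s = T.length := by omega
      subst hs'
      rw [hmn]
      symm
      apply List.drop_eq_nil_of_le
      omega
    | succ k ih =>
      intro s hs
      have hslen : s < T.length := by omega
      rw [List.range'_succ, List.flatMap_cons, List.filter_append, List.map_append,
        List.filter_append, List.map_append, ih (s + 1) (by omega)]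
      -- suffix-link arc is filtered out
      have harc : ([((s + 1 : ℕ), S (s + 1))].filter
          (fun e => decide (∃ c : α, heapH T e.1 ++ [c] = heapH T e.2))) = [] := by
        rw [List.filter_cons]
        have : (decide (∃ c : α, heapH T (s+1) ++ [c] = heapH T (S (s+1)))) = false := by
          simp only [decide_eq_false_iff_not]
          rintro ⟨c', hc'⟩
          obtain ⟨_, c, hc⟩ := hS (s + 1) (by omega) (by omega)
          have e1 := congrArg List.length hc'
          have e2 := congrArg List.length hc
          simp at e1 e2
          omega
        rw [this]
        simp
      rw [harc]
      simp only [List.map_nil, List.append_nil]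
      -- labels of q s
      have hlab : ((q s).filter
            (fun e => decide (∃ c : α, heapH T e.1 ++ [c] = heapH T e.2))).map
          (fun e => Ψ e.1 e.2) =
          (heapH T (s + 1)).drop ((heapH T s).length - 1) := by
        rcases Nat.eq_zero_or_pos s with rfl | hs1
        · obtain ⟨hm, hf⟩ := arcPath_labels T Ψ hΨ (q 0) 0 1 hq0
          rw [hf, heapH_zero] at *
          simp at hm
          rw [hm]
          simp [heapH_zero]
        · obtain ⟨hm, hf⟩ := arcPath_labels T Ψ hΨ (q s) (S s) (s + 1) (hqi s hs1 (by omega))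
          obtain ⟨_, c, hc⟩ := hS s hs1 (by omega)
          have e2 := congrArg List.length hc
          simp only [List.length_cons] at e2
          rw [hf]
          have := congrArg (List.drop (heapH T (S s)).length) hm
          rw [List.drop_left] at this
          rw [this]
          congr 1
          omega
      rw [hlab]
      -- gluing
      set a := (heapH T s).length - 1 with hadef
      set b := (heapH T (s + 1)).length with hbdef
      obtain ⟨hpre, hne⟩ := heapH_isPrefix T hslen
      have hb1 : 1 ≤ b := by
        rw [hbdef]
        rcases Nat.eq_zero_or_pos (heapH T (s+1)).length with h0 | h1
        · exact absurd (List.length_eq_zero_iff.mp h0) hne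
        · omega
      have hab : a ≤ b := by
        rcases Nat.eq_zero_or_pos s with rfl | hs1
        · simp [hadef, heapH_zero]
        · have := heapH_mono T hu' s hs1 (by omega)
          omega
      have hts : heapH T (s + 1) = (T.drop s).take b := List.prefix_iff_eq_take.mp hpre
      have hstep : s + 1 + b - 1 = s + b := by omega
      rw [hstep, hts, List.drop_take, List.drop_drop]
      have hd2 : T.drop (s + b) = (T.drop (s + a)).drop (b - a) := by
        rw [List.drop_drop]
        congr 1
        omega
      rw [hd2, List.take_append_drop]
      have hsa : s + a = s + (heapH T s).length - 1 := by
        rcases Nat.eq_zero_or_pos s with rfl | hs1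
        · simp [hadef, heapH_zero]
        · have hms : 1 ≤ (heapH T s).length := by
            obtain ⟨s', rfl⟩ : ∃ s', s = s' + 1 := ⟨s - 1, by omega⟩
            obtain ⟨_, hne'⟩ := heapH_isPrefix T (by omega : s' < T.length)
            rcases Nat.eq_zero_or_pos (heapH T (s'+1)).length with h0 | h1
            · exact absurd (List.length_eq_zero_iff.mp h0) hne'
            · omega
          omega
      rw [hsa]
  have := key T.length 0 (by omega)
  rw [List.range_eq_range'] at hpeq
  rw [hpeq, this]
  simp [heapH_zero]
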